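/- Under the Setup: (a) for all distinct i, j ∈ {1,2,3,4}, v_j ∉ {−v_i, v_i}; (b) for all distinct i, j, ℓ ∈ {1,2,3,4}, det(v_i, v_j, v_ℓ) ≠ 0; (c) each T_i is contained in an open hemisphere of S², i.e. there exists w ∈ S² with ⟨x, w⟩ > 0 for all x ∈ T_i; (d) for all distinct i, j, ℓ ∈ {1,2,3,4}, 0 < θ_{ij} < π and 0 < Θ_{ijℓ} < π. -/

import Mathlib

open MeasureTheory Real
open scoped RealInnerProductSpace

noncomputable section

abbrev E3 := EuclideanSpace ℝ (Fin 3)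

/-- The surface (area) measure `σ` on the unit sphere `S² ⊆ ℝ³`, normalized so that
`σ(S²) = 4π`. -/
def sphereArea : Measure (Metric.sphere (0 : E3) 1) := (volume : Measure E3).toSphere

/-- The cross product on `ℝ³`. -/
def cross3 (a b : E3) : E3 :=
  (WithLp.equiv 2 (Fin 3 → ℝ)).symm
    ![a 1 * b 2 - a 2 * b 1, a 2 * b 0 - a 0 * b 2, a 0 * b 1 - a 1 * b 0]

/-- The determinant of the 3×3 matrix with rows `a`, `b`, `c`. -/
def det3 (a b c : E3) : ℝ :=
  a 0 * (b 1 * c 2 - b 2 * c 1) - a 1 * (b 0 * c 2 - b 2 * c 0) +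
    a 2 * (b 0 * c 1 - b 1 * c 0)

/-!
The defining properties of `v_ℓ` say that `z_k - z_i` is orthogonal to `v_j` whenever
`i, k ≠ j`, while `⟨z_k - z_i, v_i⟩ > 0` for `k ≠ i`. Hence `v_j ≠ ±v_i`. If `v_ℓ` lay in the
plane spanned by `v_i, v_j`, then `z_m - z_ℓ` (with `m` the fourth index), being orthogonal to
`v_i` and `v_j`, would be orthogonal to `v_ℓ` as well, which it is not. Both angle statements then
reduce to `|⟨a, b⟩| < 1` for unit vectors `b ≠ ±a`: for `Θ_{ijℓ}`, `v_ℓ` is orthogonal to the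
normal of `(v_j, v_ℓ)` but, since `det(v_i, v_j, v_ℓ) ≠ 0`, not to that of `(v_i, v_j)`. Finally,
the `⟨x, z_j⟩` sum to zero and do not all vanish since the `z_j` span `ℝ³`, so their maximum
`⟨x, z_i⟩` on `T_i` is positive.
-/

section InnerProductSpace

variable {E : Type*} [NormedAddCommGroup E] [InnerProductSpace ℝ E]

lemma ne_and_ne_neg_of_inner_ne_zero_of_inner_eq_zero {w x y : E} (hx : ⟪w, x⟫ ≠ 0)
    (hy : ⟪w, y⟫ = 0) : y ≠ x ∧ y ≠ -x := by
  refine ⟨fun h => hx (h ▸ hy), fun h => hx ?_⟩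
  rwa [h, inner_neg_right, neg_eq_zero] at hy

lemma abs_real_inner_lt_one_of_ne {x y : E} (hx : ‖x‖ = 1) (hy : ‖y‖ = 1) (h : y ≠ x ∧ y ≠ -x) :
    |⟪x, y⟫| < 1 := by
  refine lt_of_le_of_ne (by simpa [hx, hy] using abs_real_inner_le_norm x y) fun habs => ?_
  rcases eq_or_eq_neg_of_abs_eq habs with h1 | h1
  · exact h.1 ((inner_eq_one_iff_of_norm_eq_one hx hy).mp h1).symm
  · exact h.2 (neg_eq_iff_eq_neg.mp ((inner_eq_neg_one_iff_of_norm_eq_one hx hy).mp h1).symm)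

lemma exists_inner_ne_zero_of_span_eq_top {ι : Type*} {z : ι → E}
    (hspan : Submodule.span ℝ (Set.range z) = ⊤) {x : E} (hx : x ≠ 0) : ∃ j, ⟪x, z j⟫ ≠ 0 := by
  by_contra! h
  have horth : ∀ y ∈ Submodule.span ℝ (Set.range z), ⟪x, y⟫ = 0 := fun y hy => by
    induction hy using Submodule.span_induction with
    | mem y hy => obtain ⟨j, rfl⟩ := hy; exact h j
    | zero => exact inner_zero_right x
    | add y₁ y₂ _ _ h₁ h₂ => rw [inner_add_right, h₁, h₂, add_zero]
    | smul r y _ hy => rw [real_inner_smul_right, hy, mul_zero]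
  exact hx (inner_self_eq_zero.mp (horth x (hspan ▸ Submodule.mem_top)))

lemma inner_pos_of_forall_inner_le {ι : Type*} [Fintype ι] {z : ι → E} (hsum : ∑ j, z j = 0)
    (hspan : Submodule.span ℝ (Set.range z) = ⊤) {x : E} (hx : x ≠ 0) {i : ι}
    (hmax : ∀ j, ⟪x, z j⟫ ≤ ⟪x, z i⟫) : 0 < ⟪x, z i⟫ := by
  obtain ⟨j, hj⟩ := exists_inner_ne_zero_of_span_eq_top hspan hx
  have hsum' : ∑ j, ⟪x, z j⟫ = 0 := by rw [← inner_sum, hsum, inner_zero_right]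
  obtain ⟨k, -, hk⟩ :=
    Finset.exists_pos_of_sum_zero_of_exists_nonzero _ hsum' ⟨j, Finset.mem_univ j, hj⟩
  exact hk.trans_le (hmax k)

end InnerProductSpace

lemma arccos_mem_Ioo_of_abs_lt_one {x : ℝ} (h : |x| < 1) : arccos x ∈ Set.Ioo 0 π :=
  ⟨arccos_pos.mpr (abs_lt.mp h).2, arccos_lt_pi.mpr (abs_lt.mp h).1⟩

section CrossProduct

lemma inner_eq_sum_three (x y : E3) : ⟪x, y⟫ = x 0 * y 0 + x 1 * y 1 + x 2 * y 2 := by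
  simp [PiLp.inner_apply, Fin.sum_univ_three, mul_comm]

lemma cross3_apply_zero (a b : E3) : cross3 a b 0 = a 1 * b 2 - a 2 * b 1 := rfl
lemma cross3_apply_one (a b : E3) : cross3 a b 1 = a 2 * b 0 - a 0 * b 2 := rfl
lemma cross3_apply_two (a b : E3) : cross3 a b 2 = a 0 * b 1 - a 1 * b 0 := rfl

lemma inner_cross3_left (a b c : E3) : ⟪cross3 a b, c⟫ = det3 a b c := by
  simp only [inner_eq_sum_three, cross3_apply_zero, cross3_apply_one, cross3_apply_two, det3]
  ring

lemma inner_cross3_self_right (a b : E3) : ⟪cross3 a b, b⟫ = 0 := by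
  rw [inner_cross3_left, det3]
  ring

lemma inner_cross3_self (a b : E3) :
    ⟪cross3 a b, cross3 a b⟫ = ⟪a, a⟫ * ⟪b, b⟫ - ⟪a, b⟫ ^ 2 := by
  simp only [inner_eq_sum_three, cross3_apply_zero, cross3_apply_one, cross3_apply_two]
  ring

lemma cross3_ne_zero {a b : E3} (ha : ‖a‖ = 1) (hb : ‖b‖ = 1) (h : |⟪a, b⟫| < 1) :
    cross3 a b ≠ 0 := by
  intro h0
  have hsq := inner_cross3_self a b
  rw [h0, inner_zero_left, real_inner_self_eq_norm_sq, real_inner_self_eq_norm_sq, ha, hb] at hsq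
  obtain ⟨hlo, hhi⟩ := abs_lt.mp h
  nlinarith [mul_pos (sub_pos.mpr hhi) (neg_lt_iff_pos_add.mp hlo)]

/-- Cramer's rule `‖a × b‖² c = det(c, b, n) a + det(a, c, n) b + det(a, b, c) n` for
`n = a × b`, paired with `w`. -/
lemma inner_mul_inner_cross3_self (w a b c : E3) :
    ⟪w, c⟫ * ⟪cross3 a b, cross3 a b⟫ =
      det3 c b (cross3 a b) * ⟪w, a⟫ + det3 a c (cross3 a b) * ⟪w, b⟫ +
        det3 a b c * ⟪w, cross3 a b⟫ := by
  simp only [inner_eq_sum_three, cross3_apply_zero, cross3_apply_one, cross3_apply_two, det3]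
  ring

lemma inner_eq_zero_of_det3_eq_zero {w a b c : E3} (hwa : ⟪w, a⟫ = 0) (hwb : ⟪w, b⟫ = 0)
    (hab : cross3 a b ≠ 0) (hdet : det3 a b c = 0) : ⟪w, c⟫ = 0 := by
  have h := inner_mul_inner_cross3_self w a b c
  rw [hwa, hwb, hdet] at h
  simp only [mul_zero, zero_mul, add_zero] at h
  exact (mul_eq_zero.mp h).resolve_right (inner_self_ne_zero.mpr hab)

lemma arccos_inner_normalized_cross3_mem_Ioo {a b c : E3} (hab : cross3 a b ≠ 0)
    (hbc : cross3 b c ≠ 0) (hdet : det3 a b c ≠ 0) :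
    arccos ⟪‖cross3 a b‖⁻¹ • cross3 a b, ‖cross3 b c‖⁻¹ • cross3 b c⟫ ∈ Set.Ioo 0 π := by
  have hc_ne : ⟪c, ‖cross3 a b‖⁻¹ • cross3 a b⟫ ≠ 0 := by
    rw [real_inner_smul_right, real_inner_comm, inner_cross3_left]
    exact mul_ne_zero (inv_ne_zero (norm_ne_zero_iff.mpr hab)) hdet
  have hc_eq : ⟪c, ‖cross3 b c‖⁻¹ • cross3 b c⟫ = 0 := by
    rw [real_inner_smul_right, real_inner_comm, inner_cross3_self_right, mul_zero]
  exact arccos_mem_Ioo_of_abs_lt_one <| abs_real_inner_lt_one_of_ne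
    (norm_smul_inv_norm (𝕜 := ℝ) hab) (norm_smul_inv_norm (𝕜 := ℝ) hbc)
    (ne_and_ne_neg_of_inner_ne_zero_of_inner_eq_zero hc_ne hc_eq)

end CrossProduct

section Vertices

variable {ι : Type*} {z v : ι → E3}

lemma vertex_ne_and_ne_neg
    (hv_eq : ∀ ℓ i j, i ≠ ℓ → j ≠ ℓ → ⟪z i, v ℓ⟫ = ⟪z j, v ℓ⟫)
    (hv_lt : ∀ ℓ i, i ≠ ℓ → ⟪z ℓ, v ℓ⟫ < ⟪z i, v ℓ⟫)
    {i j k : ι} (hij : i ≠ j) (hki : k ≠ i) (hkj : k ≠ j) : v j ≠ v i ∧ v j ≠ -v i := by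
  refine ne_and_ne_neg_of_inner_ne_zero_of_inner_eq_zero (w := z k - z i) ?_ ?_
  · rw [inner_sub_left]
    exact sub_ne_zero.mpr (hv_lt i k hki).ne'
  · rw [inner_sub_left, hv_eq j k i hkj hij, sub_self]

lemma det3_vertices_ne_zero (hv_norm : ∀ ℓ, ‖v ℓ‖ = 1)
    (hv_eq : ∀ ℓ i j, i ≠ ℓ → j ≠ ℓ → ⟪z i, v ℓ⟫ = ⟪z j, v ℓ⟫)
    (hv_lt : ∀ ℓ i, i ≠ ℓ → ⟪z ℓ, v ℓ⟫ < ⟪z i, v ℓ⟫)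
    {i j ℓ m : ι} (hij : i ≠ j) (hiℓ : i ≠ ℓ) (hjℓ : j ≠ ℓ) (hmi : m ≠ i) (hmj : m ≠ j)
    (hmℓ : m ≠ ℓ) : det3 (v i) (v j) (v ℓ) ≠ 0 := by
  intro hdet
  have hcross : cross3 (v i) (v j) ≠ 0 :=
    cross3_ne_zero (hv_norm i) (hv_norm j) <| abs_real_inner_lt_one_of_ne (hv_norm i) (hv_norm j)
      (vertex_ne_and_ne_neg hv_eq hv_lt hij hmi hmj)
  have horth : ∀ k, k ≠ ℓ → k ≠ m → ⟪z m - z ℓ, v k⟫ = 0 := fun k hkℓ hkm => by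
    rw [inner_sub_left, hv_eq k m ℓ hkm.symm hkℓ.symm, sub_self]
  have h :=
    inner_eq_zero_of_det3_eq_zero (horth i hiℓ hmi.symm) (horth j hjℓ hmj.symm) hcross hdet
  rw [inner_sub_left, sub_eq_zero] at h
  exact (hv_lt ℓ m hmℓ).ne' h

end Vertices

lemma Fin.exists_ne_ne_ne_of_four (a b c : Fin 4) : ∃ m, m ≠ a ∧ m ≠ b ∧ m ≠ c := by
  revert a b c
  decide

theorem vertices_nondegenerate_general
    (z v : Fin 4 → E3)
    (hz_ne : ∀ i, z i ≠ 0)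
    (hz_span : Submodule.span ℝ (Set.range z) = ⊤)
    (hz_sum : ∑ i : Fin 4, z i = 0)
    (T : Fin 4 → Set (Metric.sphere (0 : E3) 1))
    (hT : ∀ i, T i = {x | ⟪(x : E3), z i⟫ =
      Finset.univ.sup' Finset.univ_nonempty fun j : Fin 4 => ⟪(x : E3), z j⟫})
    (hv_norm : ∀ ℓ, ‖v ℓ‖ = 1)
    (hv_eq : ∀ ℓ i j : Fin 4, i ≠ ℓ → j ≠ ℓ → ⟪z i, v ℓ⟫ = ⟪z j, v ℓ⟫)
    (hv_lt : ∀ ℓ i : Fin 4, i ≠ ℓ → ⟪z ℓ, v ℓ⟫ < ⟪z i, v ℓ⟫)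
    (θ : Fin 4 → Fin 4 → ℝ)
    (hθ : ∀ i j, θ i j = Real.arccos ⟪v i, v j⟫)
    (Θ : Fin 4 → Fin 4 → Fin 4 → ℝ)
    (hΘ : ∀ i j l, Θ i j l = Real.arccos
      ⟪‖cross3 (v i) (v j)‖⁻¹ • cross3 (v i) (v j),
        ‖cross3 (v j) (v l)‖⁻¹ • cross3 (v j) (v l)⟫)
    :
    (∀ i j : Fin 4, i ≠ j → v j ≠ v i ∧ v j ≠ -v i) ∧
    (∀ i j ℓ : Fin 4, i ≠ j → i ≠ ℓ → j ≠ ℓ → det3 (v i) (v j) (v ℓ) ≠ 0) ∧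
    (∀ i : Fin 4, ∃ w : E3, ‖w‖ = 1 ∧ ∀ x ∈ T i, 0 < ⟪(x : E3), w⟫) ∧
    (∀ i j ℓ : Fin 4, i ≠ j → i ≠ ℓ → j ≠ ℓ →
      (0 < θ i j ∧ θ i j < Real.pi) ∧ (0 < Θ i j ℓ ∧ Θ i j ℓ < Real.pi)) := by
  have hne : ∀ i j : Fin 4, i ≠ j → v j ≠ v i ∧ v j ≠ -v i := fun i j hij => by
    obtain ⟨k, hki, hkj, -⟩ := Fin.exists_ne_ne_ne_of_four i j j
    exact vertex_ne_and_ne_neg hv_eq hv_lt hij hki hkj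
  have habs : ∀ i j : Fin 4, i ≠ j → |⟪v i, v j⟫| < 1 := fun i j hij =>
    abs_real_inner_lt_one_of_ne (hv_norm i) (hv_norm j) (hne i j hij)
  have hdet : ∀ i j ℓ : Fin 4, i ≠ j → i ≠ ℓ → j ≠ ℓ → det3 (v i) (v j) (v ℓ) ≠ 0 :=
    fun i j ℓ hij hiℓ hjℓ => by
      obtain ⟨m, hmi, hmj, hmℓ⟩ := Fin.exists_ne_ne_ne_of_four i j ℓ
      exact det3_vertices_ne_zero hv_norm hv_eq hv_lt hij hiℓ hjℓ hmi hmj hmℓ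
  refine ⟨hne, hdet, fun i => ⟨‖z i‖⁻¹ • z i, norm_smul_inv_norm (𝕜 := ℝ) (hz_ne i), ?_⟩,
    fun i j ℓ hij hiℓ hjℓ => ⟨?_, ?_⟩⟩
  · intro x hx
    have hx' : (x : E3) ∈ Subtype.val '' T i := ⟨x, hx, rfl⟩
    rw [hT i] at hx'
    have hmax : ∀ j, ⟪(x : E3), z j⟫ ≤ ⟪(x : E3), z i⟫ := fun j =>
      hx' ▸ Finset.le_sup' (fun j => ⟪(x : E3), z j⟫) (Finset.mem_univ j)
    rw [real_inner_smul_right]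
    exact mul_pos (inv_pos.mpr (norm_pos_iff.mpr (hz_ne i)))
      (inner_pos_of_forall_inner_le hz_sum hz_span (ne_zero_of_mem_unit_sphere x) hmax)
  · rw [hθ]
    exact arccos_mem_Ioo_of_abs_lt_one (habs i j hij)
  · rw [hΘ]
    exact arccos_inner_normalized_cross3_mem_Ioo
      (cross3_ne_zero (hv_norm i) (hv_norm j) (habs i j hij))
      (cross3_ne_zero (hv_norm j) (hv_norm ℓ) (habs j ℓ hjℓ)) (hdet i j ℓ hij hiℓ hjℓ)

/-- Proposition 1 (d)–(e): under the setup, (a) `vⱼ ∉ {−vᵢ, vᵢ}` for distinct `i, j`;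
(b) `det(vᵢ, vⱼ, v_ℓ) ≠ 0` for distinct `i, j, ℓ`; (c) each `Tᵢ` is contained in an
open hemisphere; (d) `0 < θ_{ij} < π` and `0 < Θ_{ijℓ} < π` for distinct `i, j, ℓ`. -/
theorem vertices_nondegenerate
    (z v : Fin 4 → E3)
    (hz_inj : Function.Injective z)
    (hz_ne : ∀ i, z i ≠ 0)
    (hz_span : Submodule.span ℝ (Set.range z) = ⊤)
    (hz_sum : ∑ i : Fin 4, z i = 0)
    (T : Fin 4 → Set (Metric.sphere (0 : E3) 1))
    (hT : ∀ i, T i = {x | ⟪(x : E3), z i⟫ =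
      Finset.univ.sup' Finset.univ_nonempty fun j : Fin 4 => ⟪(x : E3), z j⟫})
    (hzT : ∀ i, z i = ∫ x in T i, (x : E3) ∂sphereArea)
    (hv_norm : ∀ ℓ, ‖v ℓ‖ = 1)
    (hv_eq : ∀ ℓ i j : Fin 4, i ≠ ℓ → j ≠ ℓ → ⟪z i, v ℓ⟫ = ⟪z j, v ℓ⟫)
    (hv_lt : ∀ ℓ i : Fin 4, i ≠ ℓ → ⟪z ℓ, v ℓ⟫ < ⟪z i, v ℓ⟫)
    (hv_uniq : ∀ (ℓ : Fin 4) (w : E3), ‖w‖ = 1 →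
      (∀ i j : Fin 4, i ≠ ℓ → j ≠ ℓ → ⟪z i, w⟫ = ⟪z j, w⟫) →
      (∀ i : Fin 4, i ≠ ℓ → ⟪z ℓ, w⟫ < ⟪z i, w⟫) → w = v ℓ)
    (θ : Fin 4 → Fin 4 → ℝ)
    (hθ : ∀ i j, θ i j = Real.arccos ⟪v i, v j⟫)
    (Θ : Fin 4 → Fin 4 → Fin 4 → ℝ)
    (hΘ : ∀ i j l, Θ i j l = Real.arccos
      ⟪‖cross3 (v i) (v j)‖⁻¹ • cross3 (v i) (v j),
        ‖cross3 (v j) (v l)‖⁻¹ • cross3 (v j) (v l)⟫)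
    :
    (∀ i j : Fin 4, i ≠ j → v j ≠ v i ∧ v j ≠ -v i) ∧
    (∀ i j ℓ : Fin 4, i ≠ j → i ≠ ℓ → j ≠ ℓ → det3 (v i) (v j) (v ℓ) ≠ 0) ∧
    (∀ i : Fin 4, ∃ w : E3, ‖w‖ = 1 ∧ ∀ x ∈ T i, 0 < ⟪(x : E3), w⟫) ∧
    (∀ i j ℓ : Fin 4, i ≠ j → i ≠ ℓ → j ≠ ℓ →
      (0 < θ i j ∧ θ i j < Real.pi) ∧ (0 < Θ i j ℓ ∧ Θ i j ℓ < Real.pi)) :=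
  vertices_nondegenerate_general z v hz_ne hz_span hz_sum T hT hv_norm hv_eq hv_lt θ hθ Θ hΘ
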